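/- arXiv:2304.01343 — 4 statements merged into one kernel-verified Lean document; each statement's English description precedes it below -/
import Mathlib

section
/- Let λ ≥ 0, x ∈ {0,1}, and real numbers l ≤ ĉ ≤ u. Then the maximum over c ∈ [l,u] of (c·x − λ·|c − ĉ|) equals max{ĉ·x, u·x − λ·(u − ĉ)}. -/
theorem stmt_0 (lam x l chat u : ℝ) (hlam : 0 ≤ lam) (hx : x = 0 ∨ x = 1)
    (hl : l ≤ chat) (hu : chat ≤ u) :
    IsGreatest {y : ℝ | ∃ c, l ≤ c ∧ c ≤ u ∧ y = c * x - lam * |c - chat|}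
      (max (chat * x) (u * x - lam * (u - chat))) := by
  constructor
  · rcases le_total (u * x - lam * (u - chat)) (chat * x) with h | h
    · refine ⟨chat, hl, hu, ?_⟩
      rw [max_eq_left h]
      simp
    · refine ⟨u, hl.trans hu, le_refl u, ?_⟩
      rw [max_eq_right h, abs_of_nonneg (by linarith)]
  · rintro y ⟨c, hlc, hcu, rfl⟩
    rcases hx with rfl | rfl
    · refine le_max_of_le_left ?_
      have : 0 ≤ lam * |c - chat| := mul_nonneg hlam (abs_nonneg _)
      nlinarith
    · rcases le_total c chat with hc | hc
      · refine le_max_of_le_left ?_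
        rw [abs_of_nonpos (by linarith)]
        nlinarith
      · rw [abs_of_nonneg (by linarith)]
        rcases le_total lam 1 with hl1 | hl1
        · refine le_max_of_le_right ?_
          nlinarith
        · refine le_max_of_le_left ?_
          nlinarith
end

section
/- Let n ∈ ℕ, x ∈ {0,1}ⁿ, 0 ≤ λ ≤ 1, and vectors l ≤ ĉ ≤ u in ℝⁿ (componentwise). Then the maximum over c ∈ [l,u] of (cᵀx − λ·‖c − ĉ‖₁) equals Σₐ (uₐ − λ·(uₐ − ĉₐ))·xₐ. -/
theorem stmt_3 (n : ℕ) (x l chat u : Fin n → ℝ) (hx : ∀ a, x a = 0 ∨ x a = 1)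
    (lam : ℝ) (hlam0 : 0 ≤ lam) (hlam1 : lam ≤ 1)
    (hl : ∀ a, l a ≤ chat a) (hu : ∀ a, chat a ≤ u a) :
    IsGreatest {y : ℝ | ∃ c : Fin n → ℝ, (∀ a, l a ≤ c a ∧ c a ≤ u a) ∧
        y = (∑ a, c a * x a) - lam * ∑ a, |c a - chat a|}
      (∑ a, (u a - lam * (u a - chat a)) * x a) := by
  constructor
  · refine ⟨fun a => chat a + (u a - chat a) * x a, fun a => ?_, ?_⟩
    · rcases hx a with h | h <;> simp [h]
      · exact ⟨hl a, hu a⟩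
      · exact (hl a).trans (hu a)
    · rw [Finset.mul_sum, ← Finset.sum_sub_distrib]
      refine Finset.sum_congr rfl fun a _ => ?_
      rcases hx a with h | h <;>
        simp [h, abs_of_nonneg (sub_nonneg.mpr (hu a))]
  · rintro y ⟨c, hc, rfl⟩
    rw [Finset.mul_sum, ← Finset.sum_sub_distrib]
    refine Finset.sum_le_sum fun a _ => ?_
    rcases hc a with ⟨h1, h2⟩
    rcases hx a with h | h <;> rw [h] <;>
      nlinarith [le_abs_self (c a - chat a), abs_nonneg (c a - chat a), hl a, hu a]
end

section
/- Let n, K ∈ ℕ with K ≥ 1, x ∈ {0,1}ⁿ, ε > 0, u ∈ ℝⁿ, and samples ĉ⁽¹⁾,…,ĉ⁽ᴷ⁾ ∈ ℝⁿ with ĉ⁽ᵏ⁾ ≤ u componentwise. Then the infimum over λ ∈ [0, ∞) of g(λ) := λε + (1/K)·Σₖ Σₐ max{ĉₐ⁽ᵏ⁾·xₐ, uₐ·xₐ − λ·(uₐ − ĉₐ⁽ᵏ⁾)} equals min{(1/K)·Σₖ (ĉ⁽ᵏ⁾)ᵀx + ε, uᵀx}. -/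
/-! For binary `x` and `ĉ ≤ u`, each summand `max (ĉ x) (u x - λ (u - ĉ))` equals
`ĉ x + (1 - λ)⁺ (u - ĉ) x`, so the dual objective collapses to the hinge function
`A + λ ε + (1 - λ)⁺ (U - A)` with `A = (1/K) ∑ ĉᵀx` and `U = uᵀx`. Its infimum over `λ ≥ 0`
is attained at a kink, `λ = 0` or `λ = 1`. -/

open Finset

lemma max_mul_sub_mul_eq_of_zero_or_one {c u x lam : ℝ} (hx : x = 0 ∨ x = 1) (hcu : c ≤ u)
    (hlam : 0 ≤ lam) :
    max (c * x) (u * x - lam * (u - c)) = c * x + max 0 (1 - lam) * ((u - c) * x) := by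
  rcases hx with rfl | rfl
  · simp only [mul_zero, zero_sub, add_zero]
    exact max_eq_left (neg_nonpos.mpr (mul_nonneg hlam (sub_nonneg.mpr hcu)))
  · rw [mul_one, mul_one, mul_one, max_mul_of_nonneg _ _ (sub_nonneg.mpr hcu), zero_mul,
      ← max_add_add_left, add_zero]
    congr 1
    ring

lemma isGLB_hinge (A D ε : ℝ) (hε : 0 ≤ ε) :
    IsGLB {y : ℝ | ∃ lam : ℝ, 0 ≤ lam ∧ y = lam * ε + (A + max 0 (1 - lam) * D)}
      (min (A + ε) (A + D)) := by
  constructor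
  · rintro y ⟨lam, hlam, rfl⟩
    rcases le_total lam 1 with hle | hge
    · rw [max_eq_right (sub_nonneg.mpr hle)]
      calc min (A + ε) (A + D) = lam * min (A + ε) (A + D) + (1 - lam) * min (A + ε) (A + D) := by
            ring
        _ ≤ lam * (A + ε) + (1 - lam) * (A + D) :=
            add_le_add (mul_le_mul_of_nonneg_left (min_le_left _ _) hlam)
              (mul_le_mul_of_nonneg_left (min_le_right _ _) (sub_nonneg.mpr hle))
        _ = lam * ε + (A + (1 - lam) * D) := by ring
    · rw [max_eq_left (sub_nonpos.mpr hge), zero_mul, add_zero]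
      have : ε ≤ lam * ε := le_mul_of_one_le_left hε hge
      linarith [min_le_left (A + ε) (A + D)]
  · intro b hb
    refine le_min (hb ⟨1, zero_le_one, by simp [add_comm]⟩) (hb ⟨0, le_rfl, by simp⟩)

theorem stmt_4 (n K : ℕ) (hK : 1 ≤ K) (x u : Fin n → ℝ) (hx : ∀ a, x a = 0 ∨ x a = 1)
    (ε : ℝ) (hε : 0 < ε) (chat : Fin K → Fin n → ℝ) (hchat : ∀ k a, chat k a ≤ u a) :
    IsGLB {y : ℝ | ∃ lam : ℝ, 0 ≤ lam ∧
        y = lam * ε + (1 / K) * ∑ k, ∑ a,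
          max (chat k a * x a) (u a * x a - lam * (u a - chat k a))}
      (min ((1 / K) * (∑ k, ∑ a, chat k a * x a) + ε) (∑ a, u a * x a)) := by
  set A := (1 / K : ℝ) * ∑ k, ∑ a, chat k a * x a
  set U := ∑ a, u a * x a
  have hK' : (K : ℝ) ≠ 0 := Nat.cast_ne_zero.mpr (by omega)
  have objective_eq : ∀ lam : ℝ, 0 ≤ lam →
      (1 / K : ℝ) * ∑ k, ∑ a, max (chat k a * x a) (u a * x a - lam * (u a - chat k a)) =
        A + max 0 (1 - lam) * (U - A) := by
    intro lam hlam
    simp only [max_mul_sub_mul_eq_of_zero_or_one (hx _) (hchat _ _) hlam, sum_add_distrib,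
      ← mul_sum, sub_mul, sum_sub_distrib, sum_const, card_univ, Fintype.card_fin, nsmul_eq_mul, A, U]
    field_simp
  convert isGLB_hinge A (U - A) ε hε.le using 2
  · ext y
    exact exists_congr fun lam => and_congr_right fun hlam => by rw [objective_eq lam hlam]
  · rw [add_sub_cancel]
end

section
/- Let h > 0, let V, nᵥ ∈ ℕ with nᵥ ≥ 1, and for each v ∈ {1,…,V}, j ∈ {1,…,nᵥ} let αᵥⱼ ∈ [0,1], and let βᵥ ∈ [0,1] with β := Σᵥ βᵥ ∈ (0,1]. Set β̃ᵥ := βᵥ/β. Suppose for each v there is rᵥ ∈ {0,…,nᵥ} with αᵥⱼ ≤ βᵥ for j ≤ rᵥ and αᵥⱼ ≥ βᵥ for j > rᵥ. Then Σᵥ Σⱼ min{(αᵥⱼ + 1 − βᵥ)·h, h} ≥ Σᵥ β̃ᵥ·(Σⱼ αᵥⱼ)·h + (Σᵥ Σⱼ 1 − Σᵥ β̃ᵥ·nᵥ)·h. -/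
theorem stmt_10 (h : ℝ) (hh : 0 < h) (V : ℕ) (n : Fin V → ℕ) (hn : ∀ v, 1 ≤ n v)
    (α : (v : Fin V) → Fin (n v) → ℝ) (hα : ∀ v j, 0 ≤ α v j ∧ α v j ≤ 1)
    (β : Fin V → ℝ) (hβ : ∀ v, 0 ≤ β v ∧ β v ≤ 1)
    (hB0 : 0 < ∑ v, β v) (hB1 : ∑ v, β v ≤ 1)
    (r : Fin V → ℕ) (hr : ∀ v, r v ≤ n v)
    (hle : ∀ v (j : Fin (n v)), (j : ℕ) < r v → α v j ≤ β v)
    (hge : ∀ v (j : Fin (n v)), r v ≤ (j : ℕ) → β v ≤ α v j) :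
    ∑ v, ∑ j, min ((α v j + 1 - β v) * h) h ≥
      (∑ v, (β v / ∑ w, β w) * (∑ j, α v j) * h) +
        ((∑ v, (n v : ℝ)) - ∑ v, (β v / ∑ w, β w) * (n v : ℝ)) * h := by
  set B := ∑ w, β w with hBdef
  have hR : (∑ v, (β v / B) * (∑ j, α v j) * h) +
        ((∑ v, (n v : ℝ)) - ∑ v, (β v / B) * (n v : ℝ)) * h
      = ∑ v, ∑ j, ((β v / B) * α v j * h + (1 - β v / B) * h) := by
    have e : ∀ v : Fin V, ∑ j : Fin (n v), ((β v / B) * α v j * h + (1 - β v / B) * h)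
        = (β v / B) * (∑ j, α v j) * h + ((n v : ℝ) - (β v / B) * (n v : ℝ)) * h := by
      intro v
      rw [Finset.sum_add_distrib, Finset.sum_const]
      simp [Finset.mul_sum, Finset.sum_mul]
      ring
    rw [Finset.sum_congr rfl (fun v _ => e v), Finset.sum_add_distrib]
    simp only [sub_mul]
    rw [Finset.sum_sub_distrib, Finset.sum_mul, Finset.sum_mul]
  rw [ge_iff_le, hR]
  apply Finset.sum_le_sum
  intro v _
  apply Finset.sum_le_sum
  intro j _
  have h1 : β v / B ≤ 1 := by
    rw [div_le_one hB0]
    exact le_trans (Finset.single_le_sum (fun w _ => (hβ w).1) (Finset.mem_univ v)) le_rfl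
  have h2 : β v ≤ β v / B := by
    rw [le_div_iff₀ hB0]; nlinarith [(hβ v).1]
  have h3 : 0 ≤ β v / B := div_nonneg (hβ v).1 hB0.le
  have hα1 := (hα v j).1; have hα2 := (hα v j).2
  have k1 : β v / B * α v j + (1 - β v / B) ≤ α v j + 1 - β v := by
    nlinarith [mul_nonneg hα1 (sub_nonneg.2 h1)]
  have k2 : β v / B * α v j + (1 - β v / B) ≤ 1 := by
    nlinarith [mul_nonneg h3 (sub_nonneg.2 hα2)]
  apply le_min
  · nlinarith [mul_le_mul_of_nonneg_right k1 hh.le]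
  · nlinarith [mul_le_mul_of_nonneg_right k2 hh.le]
end
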